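/- arXiv:2603.26268 — 5 statements merged into one kernel-verified Lean document; each statement's English description precedes it below -/
import Mathlib

section
/- Let W be a set, and define bundle terms over a family of relations R_a ⊆ W^(ρ(a)+1). For any Kripke model M, world w, bundle term τ, and set Z ⊆ W, the term-satisfaction relation M,w,Z ⊨ τ holds if and only if there exists a pair (X,Y) in the generated neighborhood Nbh_M(w,τ) with X ⊆ Z and Y ⊆ W \ Z. (This uses the Axiom of Choice in the ∇ case.) -/
/-- Bundle terms over index set `A` with arity function `ρ`. -/
inductive BTerm (A : Type) (ρ : A → ℕ) : Type where
  | pos : BTerm A ρ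
  | neg : BTerm A ρ
  | nabla (a : A) (ts : Fin (ρ a) → BTerm A ρ) : BTerm A ρ
  | delta (a : A) (ts : Fin (ρ a) → BTerm A ρ) : BTerm A ρ

variable {A : Type} {ρ : A → ℕ} {W : Type}

/-- Term satisfaction `M,w,Z ⊨ τ` in the Kripke model given by relations `R`. -/
def TSat (R : ∀ a : A, W → Set (Fin (ρ a) → W)) (w : W) (Z : Set W) : BTerm A ρ → Prop
  | .pos => w ∈ Z
  | .neg => w ∉ Z
  | .nabla a ts => ∀ v ∈ R a w, ∃ i : Fin (ρ a), TSat R (v i) Z (ts i)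
  | .delta a ts => ∃ v ∈ R a w, ∀ i : Fin (ρ a), TSat R (v i) Z (ts i)

/-- The generated neighborhood `Nbh_M(w, τ)`. -/
def Nbh (R : ∀ a : A, W → Set (Fin (ρ a) → W)) : W → BTerm A ρ → Set (Set W × Set W)
  | w, .pos => {({w}, ∅)}
  | w, .neg => {(∅, {w})}
  | w, .nabla a ts =>
      { p | ∃ f : {v // v ∈ R a w} → Set W × Set W,
          (∀ v : {v // v ∈ R a w}, ∃ i : Fin (ρ a), f v ∈ Nbh R (v.1 i) (ts i)) ∧
          p = (⋃ v, (f v).1, ⋃ v, (f v).2) }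
  | w, .delta a ts =>
      { p | ∃ v ∈ R a w, ∃ g : Fin (ρ a) → Set W × Set W,
          (∀ i : Fin (ρ a), g i ∈ Nbh R (v i) (ts i)) ∧
          p = (⋃ i, (g i).1, ⋃ i, (g i).2) }

/-- The domain `Dom_M(w, τ)`. -/
def Dom (R : ∀ a : A, W → Set (Fin (ρ a) → W)) : W → BTerm A ρ → Set W
  | w, .pos => {w}
  | w, .neg => {w}
  | w, .nabla a ts => ⋃ v ∈ R a w, ⋃ i : Fin (ρ a), Dom R (v i) (ts i)
  | w, .delta a ts => ⋃ v ∈ R a w, ⋃ i : Fin (ρ a), Dom R (v i) (ts i)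

/-- The completion `Nbh^com_M(w, τ)`. -/
def NbhCom (R : ∀ a : A, W → Set (Fin (ρ a) → W)) (w : W) (τ : BTerm A ρ) : Set (Set W) :=
  { Z | Z ⊆ Dom R w τ ∧ ∃ p ∈ Nbh R w τ, p.1 ⊆ Z ∧ p.2 ⊆ Dom R w τ \ Z }
/-- term satisfaction is equivalent to having a generated
neighborhood pair `(X, Y)` with `X ⊆ Z` and `Y ⊆ W \ Z`. -/
theorem tsat_iff_nbh (R : ∀ a : A, W → Set (Fin (ρ a) → W)) (w : W) (τ : BTerm A ρ)
    (Z : Set W) :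
    TSat R w Z τ ↔ ∃ p ∈ Nbh R w τ, p.1 ⊆ Z ∧ p.2 ⊆ Zᶜ := by
  induction τ generalizing w with
  | pos => simp [TSat, Nbh]
  | neg => simp [TSat, Nbh]
  | nabla a ts ih =>
    constructor
    · intro h
      choose i hi using fun v : {v // v ∈ R a w} => h v.1 v.2
      choose p hp h1 h2 using fun v : {v // v ∈ R a w} => ((ih (i v) (v.1 (i v))).mp (hi v))
      refine ⟨(⋃ v, (p v).1, ⋃ v, (p v).2), ⟨p, fun v => ⟨i v, hp v⟩, rfl⟩, ?_, ?_⟩ <;>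
        exact Set.iUnion_subset fun v => (by first | exact h1 v | exact h2 v)
    · rintro ⟨p, ⟨f, hf, rfl⟩, h1, h2⟩ v hv
      obtain ⟨i, hi⟩ := hf ⟨v, hv⟩
      exact ⟨i, (ih i (v i)).mpr ⟨f ⟨v, hv⟩,  hi,
        (Set.subset_iUnion (fun v => (f v).1) ⟨v, hv⟩).trans h1,
        (Set.subset_iUnion (fun v => (f v).2) ⟨v, hv⟩).trans h2⟩⟩
  | delta a ts ih =>
    constructor
    · rintro ⟨v, hv, h⟩
      choose p hp h1 h2 using fun i => (ih i (v i)).mp (h i)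
      exact ⟨(⋃ i, (p i).1, ⋃ i, (p i).2), ⟨v, hv, p, hp, rfl⟩,
        Set.iUnion_subset h1, Set.iUnion_subset h2⟩
    · rintro ⟨p, ⟨v, hv, g, hg, rfl⟩, h1, h2⟩
      exact ⟨v, hv, fun i => (ih i (v i)).mpr ⟨g i, hg i,
        (Set.subset_iUnion (fun i => (g i).1) i).trans h1,
        (Set.subset_iUnion (fun i => (g i).2) i).trans h2⟩⟩
end

section
/- If Z is a τ-bisimulation on a Kripke model M and (w,v) ∈ Z, then for every formula φ of L_○, M,w ⊨_τ φ iff M,v ⊨_τ φ. Consequently, τ-bisimilar pointed models satisfy the same L_○ formulas under τ-bundled semantics. -/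
variable {A : Type} {ρ : A → ℕ} {W : Type}

/-- Formulas of the unimodal language `L_○`. -/
inductive Form (P : Type) : Type where
  | atom : P → Form P
  | top : Form P
  | not : Form P → Form P
  | and : Form P → Form P → Form P
  | circ : Form P → Form P

namespace Form
variable {P : Type}
/-- `φ ∨ ψ`. -/
def or (φ ψ : Form P) : Form P := .not (.and (.not φ) (.not ψ))
/-- `φ → ψ`. -/
def imp (φ ψ : Form P) : Form P := .not (.and φ (.not ψ))
/-- `φ ↔ ψ`. -/
def iff (φ ψ : Form P) : Form P := .and (imp φ ψ) (imp ψ φ)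
/-- `●φ := ○¬φ`. -/
def bcirc (φ : Form P) : Form P := .circ (.not φ)
end Form

variable {A : Type} {ρ : A → ℕ} {W P : Type}

/-- τ-bundled semantics `M,w ⊨_τ φ`. -/
def BSat (R : ∀ a : A, W → Set (Fin (ρ a) → W)) (V : P → Set W) (τ : BTerm A ρ) :
    W → Form P → Prop
  | w, .atom p => w ∈ V p
  | _, .top => True
  | w, .not φ => ¬ BSat R V τ w φ
  | w, .and φ ψ => BSat R V τ w φ ∧ BSat R V τ w ψ
  | w, .circ φ => TSat R w { v | BSat R V τ v φ } τ
/-- The image `Z[X]` of a set under a relation. -/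
def relImage (Z : W → W → Prop) (X : Set W) : Set W := { v | ∃ x ∈ X, Z x v }

/-- `X` and `Y` are `Z`-coherent (relative to the domains of `w` and `v`). -/
def ZCoherent (R : ∀ a : A, W → Set (Fin (ρ a) → W)) (τ : BTerm A ρ)
    (Z : W → W → Prop) (w v : W) (X Y : Set W) : Prop :=
  relImage Z (X ∪ Y) ∩ Dom R w τ ⊆ X ∧ relImage Z (X ∪ Y) ∩ Dom R v τ ⊆ Y

/-- `Z` is a `τ`-bisimulation on the Kripke model `(W, R, V)`. -/
def IsBisim (R : ∀ a : A, W → Set (Fin (ρ a) → W)) (V : P → Set W) (τ : BTerm A ρ)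
    (Z : W → W → Prop) : Prop :=
  ∀ w v, Z w v →
    (∀ p : P, w ∈ V p ↔ v ∈ V p) ∧
    (∀ X Y : Set W, X ⊆ Dom R w τ → Y ⊆ Dom R v τ → ZCoherent R τ Z w v X Y →
      (X ∈ NbhCom R w τ ↔ Y ∈ NbhCom R v τ))

variable {W' : Type}

/-- Relations of the disjoint union of two Kripke models. -/
def sumR (R : ∀ a : A, W → Set (Fin (ρ a) → W)) (R' : ∀ a : A, W' → Set (Fin (ρ a) → W'))
    (a : A) : W ⊕ W' → Set (Fin (ρ a) → W ⊕ W')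
  | .inl w => { f | ∃ g ∈ R a w, f = Sum.inl ∘ g }
  | .inr w => { f | ∃ g ∈ R' a w, f = Sum.inr ∘ g }

/-- Valuation of the disjoint union of two Kripke models. -/
def sumV (V : P → Set W) (V' : P → Set W') (p : P) : Set (W ⊕ W') :=
  Sum.inl '' V p ∪ Sum.inr '' V' p

/-- `M,w` and `N,v` are `τ`-bisimilar: there is a `τ`-bisimulation on the
disjoint union linking the two points. -/
def Bisimilar (R : ∀ a : A, W → Set (Fin (ρ a) → W)) (V : P → Set W)
    (R' : ∀ a : A, W' → Set (Fin (ρ a) → W')) (V' : P → Set W')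
    (τ : BTerm A ρ) (w : W) (v : W') : Prop :=
  ∃ Z : (W ⊕ W') → (W ⊕ W') → Prop,
    IsBisim (sumR R R') (sumV V V') τ Z ∧ Z (.inl w) (.inr v)

/-! `M, w, S ⊨ τ` holds iff the trace `S ∩ Dom_M(w, τ)` belongs to `Nbh^com_M(w, τ)`. For the
set `S` of points satisfying a formula, the induction hypothesis makes `S` closed under `Z`, so
its traces at `w` and `v` are `Z`-coherent and τ-Coh transfers the `○` case. For bisimilar
pointed models, both embeddings into the disjoint union are bounded morphisms, which preserve
truth. -/

section
variable {R : ∀ a : A, W → Set (Fin (ρ a) → W)}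

def Supports (S : Set W) (p : Set W × Set W) : Prop := p.1 ⊆ S ∧ Disjoint p.2 S

lemma supports_iUnion_iff {ι : Sort*} {S : Set W} {p : ι → Set W × Set W} :
    Supports S (⋃ i, (p i).1, ⋃ i, (p i).2) ↔ ∀ i, Supports S (p i) := by
  simp only [Supports, Set.iUnion_subset_iff, Set.disjoint_iUnion_left, forall_and]

lemma tSat_iff_exists_nbh_supports (τ : BTerm A ρ) (w : W) (S : Set W) :
    TSat R w S τ ↔ ∃ p ∈ Nbh R w τ, Supports S p := by
  induction τ generalizing w with
  | pos => simp [TSat, Nbh, Supports]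
  | neg => simp [TSat, Nbh, Supports]
  | nabla a ts ih =>
    simp only [TSat, ih]
    constructor
    · intro h
      choose i p hp hS using fun v : {v // v ∈ R a w} => h v v.2
      exact ⟨_, ⟨p, fun v => ⟨i v, hp v⟩, rfl⟩, supports_iUnion_iff.2 hS⟩
    · rintro ⟨_, ⟨f, hf, rfl⟩, hS⟩ v hv
      obtain ⟨i, hi⟩ := hf ⟨v, hv⟩
      exact ⟨i, f ⟨v, hv⟩, hi, supports_iUnion_iff.1 hS _⟩
  | delta a ts ih =>
    simp only [TSat, ih]
    constructor
    · rintro ⟨v, hv, h⟩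
      choose p hp hS using h
      exact ⟨_, ⟨v, hv, p, hp, rfl⟩, supports_iUnion_iff.2 hS⟩
    · rintro ⟨_, ⟨v, hv, g, hg, rfl⟩, hS⟩
      exact ⟨v, hv, fun i => ⟨g i, hg i, supports_iUnion_iff.1 hS i⟩⟩

lemma dom_subset_dom_nabla {a : A} {ts : Fin (ρ a) → BTerm A ρ} {w : W} {v : Fin (ρ a) → W}
    (hv : v ∈ R a w) (i : Fin (ρ a)) : Dom R (v i) (ts i) ⊆ Dom R w (.nabla a ts) :=
  fun _ hx => by simp only [Dom, Set.mem_iUnion]; exact ⟨v, hv, i, hx⟩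

lemma dom_subset_dom_delta {a : A} {ts : Fin (ρ a) → BTerm A ρ} {w : W} {v : Fin (ρ a) → W}
    (hv : v ∈ R a w) (i : Fin (ρ a)) : Dom R (v i) (ts i) ⊆ Dom R w (.delta a ts) :=
  dom_subset_dom_nabla hv i

lemma subset_dom_of_mem_nbh {τ : BTerm A ρ} {w : W} {p : Set W × Set W}
    (hp : p ∈ Nbh R w τ) : p.1 ∪ p.2 ⊆ Dom R w τ := by
  induction τ generalizing w p with
  | pos => obtain rfl : p = ({w}, ∅) := hp; simp [Dom]
  | neg => obtain rfl : p = (∅, {w}) := hp; simp [Dom]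
  | nabla a ts ih =>
    obtain ⟨f, hf, rfl⟩ := hp
    refine (Set.iUnion_union_distrib _ _).symm.subset.trans (Set.iUnion_subset fun v => ?_)
    obtain ⟨i, hi⟩ := hf v
    exact (ih i hi).trans (dom_subset_dom_nabla v.2 i)
  | delta a ts ih =>
    obtain ⟨v, hv, g, hg, rfl⟩ := hp
    refine (Set.iUnion_union_distrib _ _).symm.subset.trans (Set.iUnion_subset fun i => ?_)
    exact (ih i (hg i)).trans (dom_subset_dom_delta hv i)

lemma tSat_iff_inter_dom_mem_nbhCom (τ : BTerm A ρ) (w : W) (S : Set W) :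
    TSat R w S τ ↔ S ∩ Dom R w τ ∈ NbhCom R w τ := by
  simp only [tSat_iff_exists_nbh_supports, NbhCom, Set.mem_ofPred_eq, Set.inter_subset_right,
    true_and]
  refine exists_congr fun p => and_congr_right fun hp => ?_
  obtain ⟨h1, h2⟩ := Set.union_subset_iff.1 (subset_dom_of_mem_nbh hp)
  simp only [Supports, Set.subset_inter_iff, h1, and_true, Set.subset_sdiff, h2, true_and,
    Set.sdiff_inter_self_eq_sdiff]

lemma zCoherent_inter_dom {τ : BTerm A ρ} {Z : W → W → Prop} {w v : W} {S : Set W}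
    (hS : ∀ x y, Z x y → x ∈ S → y ∈ S) :
    ZCoherent R τ Z w v (S ∩ Dom R w τ) (S ∩ Dom R v τ) := by
  have hZS : relImage Z (S ∩ Dom R w τ ∪ S ∩ Dom R v τ) ⊆ S := by
    rintro y ⟨x, hx, hxy⟩
    exact hS x y hxy (hx.elim (·.1) (·.1))
  exact ⟨Set.inter_subset_inter_left _ hZS, Set.inter_subset_inter_left _ hZS⟩

variable {V : P → Set W} {τ : BTerm A ρ}

lemma IsBisim.bSat_iff {Z : W → W → Prop} (hZ : IsBisim R V τ Z) (φ : Form P) :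
    ∀ {w v}, Z w v → (BSat R V τ w φ ↔ BSat R V τ v φ) := by
  induction φ with
  | atom p => exact fun h => (hZ _ _ h).1 p
  | top => exact fun _ => Iff.rfl
  | not φ ih => exact fun h => not_congr (ih h)
  | and φ ψ ihφ ihψ => exact fun h => and_congr (ihφ h) (ihψ h)
  | circ φ ih =>
    intro w v h
    simp only [BSat, tSat_iff_inter_dom_mem_nbhCom]
    exact (hZ w v h).2 _ _ Set.inter_subset_right Set.inter_subset_right
      (zCoherent_inter_dom fun x y hxy => (ih hxy).1)

end

structure IsBoundedMorphism (R : ∀ a : A, W → Set (Fin (ρ a) → W)) (V : P → Set W)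
    (R' : ∀ a : A, W' → Set (Fin (ρ a) → W')) (V' : P → Set W') (f : W → W') : Prop where
  preimage_val_eq : ∀ p, f ⁻¹' V' p = V p
  rel_eq_image : ∀ a w, R' a (f w) = (f ∘ ·) '' R a w

section
variable {R : ∀ a : A, W → Set (Fin (ρ a) → W)} {V : P → Set W}
  {R' : ∀ a : A, W' → Set (Fin (ρ a) → W')} {V' : P → Set W'} {f : W → W'}

lemma tSat_comp_iff (hf : ∀ a w, R' a (f w) = (f ∘ ·) '' R a w) (τ : BTerm A ρ) (w : W)
    (S : Set W') : TSat R' (f w) S τ ↔ TSat R w (f ⁻¹' S) τ := by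
  induction τ generalizing w with
  | pos => exact Iff.rfl
  | neg => exact Iff.rfl
  | nabla a ts ih => simp only [TSat, hf, Set.forall_mem_image, Function.comp_apply, ih]
  | delta a ts ih => simp only [TSat, hf, Set.exists_mem_image, Function.comp_apply, ih]

lemma IsBoundedMorphism.bSat_iff (hf : IsBoundedMorphism R V R' V' f) (τ : BTerm A ρ)
    (φ : Form P) (w : W) : BSat R' V' τ (f w) φ ↔ BSat R V τ w φ := by
  induction φ generalizing w with
  | atom p => exact Set.ext_iff.1 (hf.preimage_val_eq p) w
  | top => exact Iff.rfl
  | not φ ih => exact not_congr (ih w)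
  | and φ ψ ihφ ihψ => exact and_congr (ihφ w) (ihψ w)
  | circ φ ih =>
    simp only [BSat, tSat_comp_iff hf.rel_eq_image, Set.preimage_ofPred_eq, ih]

lemma isBoundedMorphism_inl : IsBoundedMorphism R V (sumR R R') (sumV V V') Sum.inl := by
  constructor
  · intro p; ext; simp [sumV]
  · intro a w; ext; simp [sumR, eq_comm]

lemma isBoundedMorphism_inr : IsBoundedMorphism R' V' (sumR R R') (sumV V V') Sum.inr := by
  constructor
  · intro p; ext; simp [sumV]
  · intro a w; ext; simp [sumR, eq_comm]

end

/-- truth under `τ`-bundled semantics is invariant under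
`τ`-bisimulations; consequently `τ`-bisimilar pointed models satisfy the same
formulas. -/
theorem bisim_invariance (R : ∀ a : A, W → Set (Fin (ρ a) → W)) (V : P → Set W)
    (τ : BTerm A ρ) :
    (∀ Z : W → W → Prop, IsBisim R V τ Z →
      ∀ w v, Z w v → ∀ φ : Form P, BSat R V τ w φ ↔ BSat R V τ v φ) ∧
    (∀ (W' : Type) (R' : ∀ a : A, W' → Set (Fin (ρ a) → W')) (V' : P → Set W')
      (w : W) (v : W'), Bisimilar R V R' V' τ w v →
        ∀ φ : Form P, BSat R V τ w φ ↔ BSat R' V' τ v φ) := by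
  refine ⟨fun Z hZ w v h φ => hZ.bSat_iff φ h, ?_⟩
  rintro W' R' V' w v ⟨Z, hZ, hwv⟩ φ
  rw [← isBoundedMorphism_inl.bSat_iff τ φ w, ← isBoundedMorphism_inr.bSat_iff τ φ v]
  exact hZ.bSat_iff φ hwv
end

section
/- Every bundle term in the syntactic class T^× is convex over every Kripke model. More precisely: for terms built purely from (+) (resp. purely from (−)), the generated neighborhoods Nbh_M(w,τ) have second (resp. first) component always ∅; and for every τ in T^×, Nbh_M(w,τ) is a Cartesian product N⁺ × N⁻ of two families of subsets of W, hence convex. -/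
variable {A : Type} {ρ : A → ℕ} {W : Type}

/-- `τ` is convex over the Kripke model with relations `R`. -/
def ConvexTerm (R : ∀ a : A, W → Set (Fin (ρ a) → W)) (τ : BTerm A ρ) : Prop :=
  ∀ (w : W) (p q : Set W × Set W), p ∈ Nbh R w τ → q ∈ Nbh R w τ →
    p.1 ∩ p.2 = ∅ → q.1 ∩ q.2 = ∅ → p.1 ∩ q.2 = ∅ → (p.1, q.2) ∈ Nbh R w τ
/-- Purely positive bundle terms. -/
inductive IsPos : BTerm A ρ → Prop where
  | pos : IsPos .pos
  | nabla (a : A) (ts : Fin (ρ a) → BTerm A ρ) : (∀ i, IsPos (ts i)) → IsPos (.nabla a ts)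
  | delta (a : A) (ts : Fin (ρ a) → BTerm A ρ) : (∀ i, IsPos (ts i)) → IsPos (.delta a ts)

/-- Purely negative bundle terms. -/
inductive IsNeg : BTerm A ρ → Prop where
  | neg : IsNeg .neg
  | nabla (a : A) (ts : Fin (ρ a) → BTerm A ρ) : (∀ i, IsNeg (ts i)) → IsNeg (.nabla a ts)
  | delta (a : A) (ts : Fin (ρ a) → BTerm A ρ) : (∀ i, IsNeg (ts i)) → IsNeg (.delta a ts)

/-- The syntactic class `T^×`: positive terms, negative terms, conjunctions
(`Δ` over a designated binary identity index), and boxes `∇_a` for unary `a`. -/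
inductive IsCross (isId2 : A → Prop) : BTerm A ρ → Prop where
  | ofPos {τ : BTerm A ρ} : IsPos τ → IsCross isId2 τ
  | ofNeg {τ : BTerm A ρ} : IsNeg τ → IsCross isId2 τ
  | conj (a : A) (ha : ρ a = 2) (hid : isId2 a) (ts : Fin (ρ a) → BTerm A ρ) :
      (∀ i, IsCross isId2 (ts i)) → IsCross isId2 (.delta a ts)
  | box (a : A) (ha : ρ a = 1) (ts : Fin (ρ a) → BTerm A ρ) :
      (∀ i, IsCross isId2 (ts i)) → IsCross isId2 (.nabla a ts)

/-- positive terms have trivially empty negative components,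
negative terms have trivially empty positive components, the generated
neighborhoods of terms in `T^×` are Cartesian products, and hence every term
in `T^×` is convex over every Kripke model. -/
theorem cross_convex (R : ∀ a : A, W → Set (Fin (ρ a) → W)) (isId2 : A → Prop)
    (hId : ∀ a, isId2 a → ∀ w : W, R a w = { f | ∀ i, f i = w }) :
    (∀ τ : BTerm A ρ, IsPos τ → ∀ (w : W), ∀ p ∈ Nbh R w τ, p.2 = ∅) ∧
    (∀ τ : BTerm A ρ, IsNeg τ → ∀ (w : W), ∀ p ∈ Nbh R w τ, p.1 = ∅) ∧
    (∀ τ : BTerm A ρ, IsCross isId2 τ → ∀ w : W,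
      ∃ Np Nm : Set (Set W), Nbh R w τ = Np ×ˢ Nm) ∧
    (∀ τ : BTerm A ρ, IsCross isId2 τ → ConvexTerm R τ) := by
  have hpos : ∀ τ : BTerm A ρ, IsPos τ → ∀ (w : W), ∀ p ∈ Nbh R w τ, p.2 = ∅ := by
    intro τ hτ
    induction hτ with
    | pos =>
        intro w p hp
        simp only [Nbh, Set.mem_singleton_iff] at hp
        rw [hp]
    | nabla a ts h ih =>
        intro w p hp
        obtain ⟨f, hf, hpeq⟩ := hp
        rw [hpeq]
        simp only [Set.iUnion_eq_empty]
        intro v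
        obtain ⟨i, hfi⟩ := hf v
        exact ih i (v.1 i) (f v) hfi
    | delta a ts h ih =>
        intro w p hp
        obtain ⟨v, hv, g, hg, hpeq⟩ := hp
        rw [hpeq]
        simp only [Set.iUnion_eq_empty]
        intro i
        exact ih i (v i) (g i) (hg i)
  have hneg : ∀ τ : BTerm A ρ, IsNeg τ → ∀ (w : W), ∀ p ∈ Nbh R w τ, p.1 = ∅ := by
    intro τ hτ
    induction hτ with
    | neg =>
        intro w p hp
        simp only [Nbh, Set.mem_singleton_iff] at hp
        rw [hp]
    | nabla a ts h ih =>
        intro w p hp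
        obtain ⟨f, hf, hpeq⟩ := hp
        rw [hpeq]
        simp only [Set.iUnion_eq_empty]
        intro v
        obtain ⟨i, hfi⟩ := hf v
        exact ih i (v.1 i) (f v) hfi
    | delta a ts h ih =>
        intro w p hp
        obtain ⟨v, hv, g, hg, hpeq⟩ := hp
        rw [hpeq]
        simp only [Set.iUnion_eq_empty]
        intro i
        exact ih i (v i) (g i) (hg i)
  have hprod : ∀ τ : BTerm A ρ, IsCross isId2 τ → ∀ w : W,
      ∃ Np Nm : Set (Set W), Nbh R w τ = Np ×ˢ Nm := by
    intro τ hτ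
    induction hτ with
    | @ofPos τ h =>
        intro w
        refine ⟨{X | (X, ∅) ∈ Nbh R w τ}, {∅}, ?_⟩
        ext p
        simp only [Set.mem_prod, Set.mem_setOf_eq, Set.mem_singleton_iff]
        constructor
        · intro hp
          have h2 := hpos τ h w p hp
          refine ⟨?_, h2⟩
          rw [← h2]
          exact hp
        · rintro ⟨h1, h2⟩
          have : p = (p.1, ∅) := by rw [← h2]
          rw [this]
          exact h1
    | @ofNeg τ h =>
        intro w
        refine ⟨{∅}, {Y | (∅, Y) ∈ Nbh R w τ}, ?_⟩
        ext p
        simp only [Set.mem_prod, Set.mem_setOf_eq, Set.mem_singleton_iff]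
        constructor
        · intro hp
          have h1 := hneg τ h w p hp
          refine ⟨h1, ?_⟩
          rw [← h1]
          exact hp
        · rintro ⟨h1, h2⟩
          have : p = (∅, p.2) := by rw [← h1]
          rw [this]
          exact h2
    | conj a ha hid ts h ih =>
        intro w
        choose NpF NmF hNF using fun i => ih i
        refine ⟨{X | ∃ g : Fin (ρ a) → Set W, (∀ i, g i ∈ NpF i w) ∧ X = ⋃ i, g i},
                {Y | ∃ g : Fin (ρ a) → Set W, (∀ i, g i ∈ NmF i w) ∧ Y = ⋃ i, g i}, ?_⟩
        ext p
        simp only [Nbh, Set.mem_setOf_eq, Set.mem_prod]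
        constructor
        · rintro ⟨v, hv, g, hg, hpeq⟩
          rw [hId a hid w] at hv
          have hvw : ∀ i, v i = w := hv
          have hg' : ∀ i, g i ∈ NpF i w ×ˢ NmF i w := by
            intro i
            have := hg i
            rw [hvw i, hNF i w] at this
            exact this
          exact ⟨⟨fun i => (g i).1, fun i => (hg' i).1, by rw [hpeq]⟩,
                 ⟨fun i => (g i).2, fun i => (hg' i).2, by rw [hpeq]⟩⟩
        · rintro ⟨⟨gp, hgp, h1⟩, ⟨gm, hgm, h2⟩⟩
          refine ⟨fun _ => w, ?_, fun i => (gp i, gm i), fun i => ?_, ?_⟩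
          · rw [hId a hid w]
            exact fun i => rfl
          · rw [hNF i w]
            exact ⟨hgp i, hgm i⟩
          · rw [← h1, ← h2]
    | box a ha ts h ih =>
        intro w
        choose NpF NmF hNF using fun i => ih i
        have i0 : Fin (ρ a) := ⟨0, by omega⟩
        have huniq : ∀ i : Fin (ρ a), i = i0 := by
          intro i
          have := i.isLt
          apply Fin.ext
          omega
        refine ⟨{X | ∃ fp : {v // v ∈ R a w} → Set W,
                  (∀ v, fp v ∈ NpF i0 (v.1 i0)) ∧ X = ⋃ v, fp v},
                {Y | ∃ fm : {v // v ∈ R a w} → Set W,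
                  (∀ v, fm v ∈ NmF i0 (v.1 i0)) ∧ Y = ⋃ v, fm v}, ?_⟩
        ext p
        simp only [Nbh, Set.mem_setOf_eq, Set.mem_prod]
        constructor
        · rintro ⟨f, hf, hpeq⟩
          have hf' : ∀ v : {v // v ∈ R a w}, f v ∈ NpF i0 (v.1 i0) ×ˢ NmF i0 (v.1 i0) := by
            intro v
            obtain ⟨i, hi⟩ := hf v
            rw [huniq i] at hi
            rw [← hNF i0 (v.1 i0)]
            exact hi
          exact ⟨⟨fun v => (f v).1, fun v => (hf' v).1, by rw [hpeq]⟩,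
                 ⟨fun v => (f v).2, fun v => (hf' v).2, by rw [hpeq]⟩⟩
        · rintro ⟨⟨fp, hfp, h1⟩, ⟨fm, hfm, h2⟩⟩
          refine ⟨fun v => (fp v, fm v), fun v => ⟨i0, ?_⟩, ?_⟩
          · rw [hNF i0 (v.1 i0)]
            exact ⟨hfp v, hfm v⟩
          · rw [← h1, ← h2]
  refine ⟨hpos, hneg, hprod, ?_⟩
  intro τ hτ w p q hp hq _ _ _
  obtain ⟨Np, Nm, hN⟩ := hprod τ hτ w
  rw [hN] at hp hq ⊢
  exact ⟨hp.1, hq.2⟩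
end

section
/- If τ is convex over a Kripke model M and w is a world of M, then the completion Nbh^com_M(w,τ) is convex as a family of sets: whenever Z₁, Z₂ ∈ Nbh^com_M(w,τ), Z₃ ⊆ Dom_M(w,τ), and Z₁ ⊆ Z₃ ⊆ Z₂, then Z₃ ∈ Nbh^com_M(w,τ). -/
variable {A : Type} {ρ : A → ℕ} {W : Type}

/-- if `τ` is convex over `M`, then the completion is a convex
family of sets. -/
theorem completion_convex (R : ∀ a : A, W → Set (Fin (ρ a) → W)) (τ : BTerm A ρ)
    (hconv : ConvexTerm R τ) (w : W) :
    ∀ Z₁ Z₂ Z₃ : Set W, Z₁ ∈ NbhCom R w τ → Z₂ ∈ NbhCom R w τ →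
      Z₃ ⊆ Dom R w τ → Z₁ ⊆ Z₃ → Z₃ ⊆ Z₂ → Z₃ ∈ NbhCom R w τ := by
  rintro Z₁ Z₂ Z₃ ⟨hZ₁d, p, hp, hp1, hp2⟩ ⟨hZ₂d, q, hq, hq1, hq2⟩ hZ₃d h13 h32
  refine ⟨hZ₃d, (p.1, q.2), ?_, fun x hx => h13 (hp1 hx), fun x hx => ?_⟩
  · apply hconv w p q hp hq
    · ext x; simp only [Set.mem_inter_iff, Set.mem_empty_iff_false, iff_false]
      rintro ⟨h1, h2⟩; exact (hp2 h2).2 (hp1 h1)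
    · ext x; simp only [Set.mem_inter_iff, Set.mem_empty_iff_false, iff_false]
      rintro ⟨h1, h2⟩; exact (hq2 h2).2 (hq1 h1)
    · ext x; simp only [Set.mem_inter_iff, Set.mem_empty_iff_false, iff_false]
      rintro ⟨h1, h2⟩; exact (hq2 h2).2 (h32 (h13 (hp1 h1)))
  · exact ⟨(hq2 hx).1, fun h => (hq2 hx).2 (h32 h)⟩
end

section
/- For any Kripke model M and equivalence relation Z on M, and any pair (w,v) ∈ Z: if (w,v) satisfies the zig and zag conditions of convex τ-bisimulation, then it satisfies the coherence condition (τ-Coh) of τ-bisimulation; conversely, if τ is convex over M and (w,v) satisfies (τ-Coh), then (w,v) satisfies (τ-Zig) and (τ-Zag). Hence convex τ-bisimilarity implies τ-bisimilarity, and the two coincide for convex bundles. -/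
variable {A : Type} {ρ : A → ℕ} {W : Type}

variable {W' : Type}

/-- The coherence condition (τ-Coh) at a pair `(w, v)`. -/
def CohAt (R : ∀ a : A, W → Set (Fin (ρ a) → W)) (τ : BTerm A ρ)
    (Z : W → W → Prop) (w v : W) : Prop :=
  ∀ X Y : Set W, X ⊆ Dom R w τ → Y ⊆ Dom R v τ → ZCoherent R τ Z w v X Y →
    (X ∈ NbhCom R w τ ↔ Y ∈ NbhCom R v τ)

/-- The (τ-Zig) condition at a pair `(w, v)`. -/
def ZigAt (R : ∀ a : A, W → Set (Fin (ρ a) → W)) (τ : BTerm A ρ)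
    (Z : W → W → Prop) (w v : W) : Prop :=
  ∀ p ∈ Nbh R w τ, relImage Z p.1 ∩ p.2 = ∅ →
    ∃ q ∈ Nbh R v τ, q.1 ⊆ relImage Z p.1 ∧ q.2 ⊆ relImage Z p.2

/-- The (τ-Zag) condition at a pair `(w, v)`. -/
def ZagAt (R : ∀ a : A, W → Set (Fin (ρ a) → W)) (τ : BTerm A ρ)
    (Z : W → W → Prop) (w v : W) : Prop :=
  ∀ q ∈ Nbh R v τ, relImage Z q.1 ∩ q.2 = ∅ →
    ∃ p ∈ Nbh R w τ, p.1 ⊆ relImage (fun x y => Z y x) q.1 ∧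
      p.2 ⊆ relImage (fun x y => Z y x) q.2

lemma relImage_flip {Z : W → W → Prop} (hs : ∀ x y, Z x y → Z y x) (X : Set W) :
    relImage (fun x y => Z y x) X = relImage Z X := by
  ext u
  constructor <;> rintro ⟨x, hx, h⟩ <;> exact ⟨x, hx, hs _ _ h⟩

lemma nbh_subset_dom (R : ∀ a : A, W → Set (Fin (ρ a) → W)) :
    ∀ (τ : BTerm A ρ) (w : W) (p : Set W × Set W),
      p ∈ Nbh R w τ → p.1 ⊆ Dom R w τ ∧ p.2 ⊆ Dom R w τ := by
  intro τ
  induction τ with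
  | pos =>
    intro w p hp
    simp only [Nbh, Set.mem_singleton_iff] at hp
    subst hp; simp [Dom]
  | neg =>
    intro w p hp
    simp only [Nbh, Set.mem_singleton_iff] at hp
    subst hp; simp [Dom]
  | nabla a ts ih =>
    intro w p hp
    obtain ⟨f, hf, rfl⟩ := hp
    constructor <;>
    · intro x hx
      simp only [Set.mem_iUnion] at hx
      obtain ⟨u, hu⟩ := hx
      obtain ⟨i, hi⟩ := hf u
      have hdom := ih i (u.1 i) (f u) hi
      simp only [Dom, Set.mem_iUnion]
      exact ⟨u.1, u.2, i, by first | exact hdom.1 hu | exact hdom.2 hu⟩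
  | delta a ts ih =>
    intro w p hp
    obtain ⟨u, hu, g, hg, rfl⟩ := hp
    constructor <;>
    · intro x hx
      simp only [Set.mem_iUnion] at hx
      obtain ⟨i, hi⟩ := hx
      have hdom := ih i (u i) (g i) (hg i)
      simp only [Dom, Set.mem_iUnion]
      exact ⟨u, hu, i, by first | exact hdom.1 hi | exact hdom.2 hi⟩

/-- One direction of coherence from a zig-like condition. -/
lemma coh_dir (R : ∀ a : A, W → Set (Fin (ρ a) → W)) (τ : BTerm A ρ)
    {Z : W → W → Prop} (hsymm : ∀ x y, Z x y → Z y x) {w v : W}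
    (hzig : ∀ p ∈ Nbh R w τ, relImage Z p.1 ∩ p.2 = ∅ →
      ∃ q ∈ Nbh R v τ, q.1 ⊆ relImage Z p.1 ∧ q.2 ⊆ relImage Z p.2)
    {X Y : Set W} (hY : Y ⊆ Dom R v τ)
    (hc1 : relImage Z (X ∪ Y) ∩ Dom R w τ ⊆ X)
    (hc2 : relImage Z (X ∪ Y) ∩ Dom R v τ ⊆ Y)
    (hXmem : X ∈ NbhCom R w τ) : Y ∈ NbhCom R v τ := by
  obtain ⟨-, p, hp, hp1, hp2⟩ := hXmem
  have hdis : relImage Z p.1 ∩ p.2 = ∅ := by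
    ext u
    simp only [Set.mem_inter_iff, Set.mem_empty_iff_false, iff_false, not_and]
    rintro ⟨x, hx, hxu⟩ hu
    have hu2 := hp2 hu
    exact hu2.2 (hc1 ⟨⟨x, Or.inl (hp1 hx), hxu⟩, hu2.1⟩)
  obtain ⟨q, hq, hq1, hq2⟩ := hzig p hp hdis
  have hqdom := nbh_subset_dom R τ v q hq
  refine ⟨hY, q, hq, ?_, ?_⟩
  · intro u hu
    obtain ⟨x, hx, hxu⟩ := hq1 hu
    exact hc2 ⟨⟨x, Or.inl (hp1 hx), hxu⟩, hqdom.1 hu⟩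
  · intro u hu
    refine ⟨hqdom.2 hu, fun huY => ?_⟩
    obtain ⟨x, hx, hxu⟩ := hq2 hu
    have h2 := hp2 hx
    exact h2.2 (hc1 ⟨⟨u, Or.inr huY, hsymm _ _ hxu⟩, h2.1⟩)

/-- The zig condition from a coherence-like condition, for convex `τ`. -/
lemma zig_of_coh (R : ∀ a : A, W → Set (Fin (ρ a) → W)) (τ : BTerm A ρ)
    {Z : W → W → Prop} (hZ : Equivalence Z) (hconv : ConvexTerm R τ) {w v : W}
    (hcoh : ∀ X Y : Set W, X ⊆ Dom R w τ → Y ⊆ Dom R v τ →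
      relImage Z (X ∪ Y) ∩ Dom R w τ ⊆ X → relImage Z (X ∪ Y) ∩ Dom R v τ ⊆ Y →
      X ∈ NbhCom R w τ → Y ∈ NbhCom R v τ) :
    ∀ p ∈ Nbh R w τ, relImage Z p.1 ∩ p.2 = ∅ →
      ∃ q ∈ Nbh R v τ, q.1 ⊆ relImage Z p.1 ∧ q.2 ⊆ relImage Z p.2 := by
  intro p hp hdis
  have hpdom := nbh_subset_dom R τ w p hp
  have hdis' : ∀ x ∈ p.1, ∀ y ∈ p.2, ¬ Z x y := by
    intro x hx y hy hxy
    have : y ∈ relImage Z p.1 ∩ p.2 := ⟨⟨x, hx, hxy⟩, hy⟩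
    rw [hdis] at this; exact this
  -- First application: X1/Y1 given by the image of p.1
  have hsub1 : relImage Z (relImage Z p.1 ∩ Dom R w τ ∪ relImage Z p.1 ∩ Dom R v τ) ⊆
      relImage Z p.1 := by
    rintro u ⟨x, hx, hxu⟩
    have hx1 : x ∈ relImage Z p.1 := by
      cases hx with
      | inl h => exact h.1
      | inr h => exact h.1
    obtain ⟨y, hy, hyx⟩ := hx1
    exact ⟨y, hy, hZ.trans hyx hxu⟩
  have hX1mem : relImage Z p.1 ∩ Dom R w τ ∈ NbhCom R w τ := by
    refine ⟨Set.inter_subset_right, p, hp, ?_, ?_⟩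
    · intro u hu; exact ⟨⟨u, hu, hZ.refl u⟩, hpdom.1 hu⟩
    · intro u hu
      refine ⟨hpdom.2 hu, fun hX => ?_⟩
      have : u ∈ relImage Z p.1 ∩ p.2 := ⟨hX.1, hu⟩
      rw [hdis] at this; exact this
  have hY1mem := hcoh (relImage Z p.1 ∩ Dom R w τ) (relImage Z p.1 ∩ Dom R v τ)
    Set.inter_subset_right Set.inter_subset_right
    (fun u hu => ⟨hsub1 hu.1, hu.2⟩) (fun u hu => ⟨hsub1 hu.1, hu.2⟩) hX1mem
  obtain ⟨-, q, hq, hq1, hq2⟩ := hY1mem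
  -- Second application: X2/Y2 given by the complement of the image of p.2
  have hsub2 : ∀ {u : W}, u ∈ relImage Z (Dom R w τ \ relImage Z p.2 ∪
      Dom R v τ \ relImage Z p.2) → u ∉ relImage Z p.2 := by
    rintro u ⟨x, hx, hxu⟩ ⟨y, hy, hyu⟩
    have hx2 : x ∉ relImage Z p.2 := by
      cases hx with
      | inl h => exact h.2
      | inr h => exact h.2
    exact hx2 ⟨y, hy, hZ.trans hyu (hZ.symm hxu)⟩
  have hX2mem : Dom R w τ \ relImage Z p.2 ∈ NbhCom R w τ := by
    refine ⟨Set.diff_subset, p, hp, ?_, ?_⟩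
    · intro u hu
      refine ⟨hpdom.1 hu, ?_⟩
      rintro ⟨y, hy, hyu⟩
      exact hdis' u hu y hy (hZ.symm hyu)
    · intro u hu
      exact ⟨hpdom.2 hu, fun h => h.2 ⟨u, hu, hZ.refl u⟩⟩
  have hY2mem := hcoh (Dom R w τ \ relImage Z p.2) (Dom R v τ \ relImage Z p.2)
    Set.diff_subset Set.diff_subset
    (fun u hu => ⟨hu.2, hsub2 hu.1⟩) (fun u hu => ⟨hu.2, hsub2 hu.1⟩) hX2mem
  obtain ⟨-, q', hq', hq'1, hq'2⟩ := hY2mem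
  have hq'2' : q'.2 ⊆ relImage Z p.2 := by
    intro u hu
    have h := hq'2 hu
    by_contra hnot
    exact h.2 ⟨h.1, hnot⟩
  have hq1' : q.1 ⊆ relImage Z p.1 := fun u hu => (hq1 hu).1
  -- combine via convexity
  have d1 : q.1 ∩ q.2 = ∅ := by
    ext u
    simp only [Set.mem_inter_iff, Set.mem_empty_iff_false, iff_false, not_and]
    intro h1 h2
    exact (hq2 h2).2 (hq1 h1)
  have d2 : q'.1 ∩ q'.2 = ∅ := by
    ext u
    simp only [Set.mem_inter_iff, Set.mem_empty_iff_false, iff_false, not_and]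
    intro h1 h2
    exact (hq'2 h2).2 (hq'1 h1)
  have d3 : q.1 ∩ q'.2 = ∅ := by
    ext u
    simp only [Set.mem_inter_iff, Set.mem_empty_iff_false, iff_false, not_and]
    intro h1 h2
    obtain ⟨x, hx, hxu⟩ := hq1' h1
    obtain ⟨y, hy, hyu⟩ := hq'2' h2
    exact hdis' x hx y hy (hZ.trans hxu (hZ.symm hyu))
  exact ⟨(q.1, q'.2), hconv v q q' hq hq' d1 d2 d3, hq1', hq'2'⟩

/-- for an equivalence relation `Z` on a Kripke model and any
`(w, v) ∈ Z`: zig and zag imply coherence; and, if `τ` is convex over the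
model, coherence implies zig and zag. -/
theorem convex_bisim_iff_bisim (R : ∀ a : A, W → Set (Fin (ρ a) → W)) (τ : BTerm A ρ)
    (Z : W → W → Prop) (hZ : Equivalence Z) (w v : W) (hwv : Z w v) :
    ((ZigAt R τ Z w v ∧ ZagAt R τ Z w v) → CohAt R τ Z w v) ∧
    (ConvexTerm R τ → CohAt R τ Z w v → (ZigAt R τ Z w v ∧ ZagAt R τ Z w v)) := by
  have hsymm : ∀ x y, Z x y → Z y x := fun _ _ h => hZ.symm h
  constructor
  · rintro ⟨hzig, hzag⟩ X Y hX hY ⟨hc1, hc2⟩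
    have hzag' : ∀ q ∈ Nbh R v τ, relImage Z q.1 ∩ q.2 = ∅ →
        ∃ p ∈ Nbh R w τ, p.1 ⊆ relImage Z q.1 ∧ p.2 ⊆ relImage Z q.2 := by
      intro q hq hd
      obtain ⟨p, hp, h1, h2⟩ := hzag q hq hd
      rw [relImage_flip hsymm] at h1 h2
      exact ⟨p, hp, h1, h2⟩
    constructor
    · exact coh_dir R τ hsymm hzig hY hc1 hc2
    · refine coh_dir R τ hsymm hzag' hX ?_ ?_
      · rwa [Set.union_comm]
      · rwa [Set.union_comm]
  · intro hconv hcoh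
    have hfwd : ∀ X Y : Set W, X ⊆ Dom R w τ → Y ⊆ Dom R v τ →
        relImage Z (X ∪ Y) ∩ Dom R w τ ⊆ X → relImage Z (X ∪ Y) ∩ Dom R v τ ⊆ Y →
        X ∈ NbhCom R w τ → Y ∈ NbhCom R v τ :=
      fun X Y hX hY hc1 hc2 => (hcoh X Y hX hY ⟨hc1, hc2⟩).mp
    have hbwd : ∀ Y X : Set W, Y ⊆ Dom R v τ → X ⊆ Dom R w τ →
        relImage Z (Y ∪ X) ∩ Dom R v τ ⊆ Y → relImage Z (Y ∪ X) ∩ Dom R w τ ⊆ X →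
        Y ∈ NbhCom R v τ → X ∈ NbhCom R w τ := by
      intro Y X hY hX hc1 hc2
      rw [Set.union_comm] at hc1 hc2
      exact (hcoh X Y hX hY ⟨hc2, hc1⟩).mpr
    refine ⟨zig_of_coh R τ hZ hconv hfwd, ?_⟩
    intro q hq hd
    obtain ⟨p, hp, h1, h2⟩ := zig_of_coh R τ hZ hconv hbwd q hq hd
    rw [← relImage_flip hsymm] at h1 h2
    exact ⟨p, hp, h1, h2⟩
end
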